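/- arXiv:2502.08043 — 2 statements merged into one kernel-verified Lean document; each statement's English description precedes it below -/
import Mathlib

section
/- The 2D Euler left eigenvectors admit the sparse splitting l₁ = ξ₁ − ξ₂, l₂ = ξ₂ − ξ₃, l₃ = ξ₄, l₄ = ξ₁ + ξ₂, where ξ₁ = (−u, 1, 0, 0), ξ₂ = ((γ−1)/c)(|u⃗|²/2, −u, −v, 1), ξ₃ = (c, 0, 0, 0), ξ₄ = (−v, 0, 1, 0); and with this choice L R = I, where R is the right eigenmatrix with columns r₁ = ½(0,1,0,u)ᵀ − (1/(2c))(1,u,v,H)ᵀ, r₂ = −(1/c)(1,u,v,|u⃗|²/2)ᵀ, r₃ = (0,0,1,v)ᵀ, r₄ = ½(0,1,0,u)ᵀ + (1/(2c))(1,u,v,H)ᵀ. -/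
/-!
The splitting says `L = S Ξ`, where `Ξ` has rows `ξ₁, …, ξ₄` and `S` is a constant integer
matrix. The sparse rows pair with the columns of `R` to a constant matrix: `Ξ R` does not depend
on the state, and it is `S⁻¹`. The only pairings that involve the thermodynamics are `ξ₂ · r₁`
and `ξ₂ · r₄`, where `(|u⃗|²/2, -u, -v, 1) · (1, u, v, H) = H - |u⃗|²/2 = c² / (γ - 1)` cancels
the prefactor `(γ - 1) / c` of `ξ₂`.
-/

open Matrix

theorem Matrix.of_mul_transpose_of {l m n R : Type*} [Fintype m] [Mul R] [AddCommMonoid R]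
    (rows : l → m → R) (cols : n → m → R) :
    of rows * (of cols)ᵀ = of fun i j => rows i ⬝ᵥ cols j :=
  rfl

namespace Euler2D

def splitMatrix {R : Type*} [Ring R] : Matrix (Fin 4) (Fin 4) R :=
  !![1, -1, 0, 0; 0, 1, -1, 0; 0, 0, 0, 1; 1, 1, 0, 0]

theorem of_split_rows {R n : Type*} [Ring R] (ξ₁ ξ₂ ξ₃ ξ₄ : n → R) :
    of ![ξ₁ - ξ₂, ξ₂ - ξ₃, ξ₄, ξ₁ + ξ₂] =
      (splitMatrix : Matrix (Fin 4) (Fin 4) R) * of ![ξ₁, ξ₂, ξ₃, ξ₄] := by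
  simp [splitMatrix, cons_mul, sub_eq_add_neg]

variable {K : Type*} [Field K]

def splitMatrixInv : Matrix (Fin 4) (Fin 4) K :=
  !![1 / 2, 0, 0, 1 / 2; -1 / 2, 0, 0, 1 / 2; -1 / 2, -1, 0, 1 / 2; 0, 0, 1, 0]

theorem splitMatrix_mul_splitMatrixInv [NeZero (2 : K)] :
    (splitMatrix : Matrix (Fin 4) (Fin 4) K) * splitMatrixInv = 1 := by
  ext i j
  fin_cases i <;> fin_cases j <;>
    simp [splitMatrix, splitMatrixInv, mul_apply, Fin.sum_univ_four, one_apply] <;>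
    field_simp <;> ring

def sparseRows (u v c γ : K) : Matrix (Fin 4) (Fin 4) K :=
  of ![![-u, 1, 0, 0], ((γ - 1) / c) • ![(u ^ 2 + v ^ 2) / 2, -u, -v, 1], ![c, 0, 0, 0],
    ![-v, 0, 1, 0]]

def rightEigenmatrix (u v c H : K) : Matrix (Fin 4) (Fin 4) K :=
  (of ![(1 / 2 : K) • ![0, 1, 0, u] - (1 / (2 * c)) • ![1, u, v, H],
    (-(1 / c) : K) • ![1, u, v, (u ^ 2 + v ^ 2) / 2],
    ![0, 0, 1, v],
    (1 / 2 : K) • ![0, 1, 0, u] + (1 / (2 * c)) • ![1, u, v, H]])ᵀ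

theorem sparseRows_mul_rightEigenmatrix [NeZero (2 : K)] {u v c γ H : K} (hc : c ≠ 0)
    (hγ : γ - 1 ≠ 0) (hH : H = c ^ 2 / (γ - 1) + (u ^ 2 + v ^ 2) / 2) :
    sparseRows u v c γ * rightEigenmatrix u v c H = splitMatrixInv := by
  subst hH
  rw [sparseRows, rightEigenmatrix, of_mul_transpose_of]
  ext i j
  fin_cases i <;> fin_cases j <;> simp [splitMatrixInv] <;>
    field_simp <;> ring

end Euler2D

open Euler2D in
/-- The 2D Euler left eigenvectors split as `l₁ = ξ₁ - ξ₂`, `l₂ = ξ₂ - ξ₃`,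
`l₃ = ξ₄`, `l₄ = ξ₁ + ξ₂` with the sparse vectors `ξᵢ` given below, and with
this normalization `L · R = I` where `R` is the right eigenmatrix. -/
theorem euler2D_left_right_eigenmatrix_identity (ρ u v p γ : ℝ)
    (hρ : 0 < ρ) (hp : 0 < p) (hγ : 1 < γ)
    (c H : ℝ) (hc : c = Real.sqrt (γ * p / ρ))
    (hH : H = c ^ 2 / (γ - 1) + (u ^ 2 + v ^ 2) / 2)
    (ξ₁ ξ₂ ξ₃ ξ₄ : Fin 4 → ℝ)
    (hξ₁ : ξ₁ = ![-u, 1, 0, 0])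
    (hξ₂ : ξ₂ = ((γ - 1) / c) • ![(u ^ 2 + v ^ 2) / 2, -u, -v, 1])
    (hξ₃ : ξ₃ = ![c, 0, 0, 0])
    (hξ₄ : ξ₄ = ![-v, 0, 1, 0])
    (L R : Matrix (Fin 4) (Fin 4) ℝ)
    (hL : L = Matrix.of ![ξ₁ - ξ₂, ξ₂ - ξ₃, ξ₄, ξ₁ + ξ₂])
    (hR : R = (Matrix.of ![(1 / 2 : ℝ) • ![0, 1, 0, u] - (1 / (2 * c)) • ![1, u, v, H],
                (-(1 / c) : ℝ) • ![1, u, v, (u ^ 2 + v ^ 2) / 2],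
                ![0, 0, 1, v],
                (1 / 2 : ℝ) • ![0, 1, 0, u] + (1 / (2 * c)) • ![1, u, v, H]])ᵀ) :
    L * R = 1 := by
  have hc₀ : c ≠ 0 := by
    rw [hc]
    exact (Real.sqrt_pos.2 (by positivity)).ne'
  have hγ₁ : γ - 1 ≠ 0 := sub_ne_zero.2 hγ.ne'
  have hΞ : of ![ξ₁, ξ₂, ξ₃, ξ₄] = sparseRows u v c γ := by
    rw [hξ₁, hξ₂, hξ₃, hξ₄, sparseRows]
  have hR' : R = rightEigenmatrix u v c H := hR
  rw [hL, hR', of_split_rows, hΞ, Matrix.mul_assoc, sparseRows_mul_rightEigenmatrix hc₀ hγ₁ hH,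
    splitMatrix_mul_splitMatrixInv]
end

section
/- SOS decomposition of the WENO-JS smoothness indicator for quartics: for every polynomial p of degree ≤ 4 and every h > 0, ∫_{−h/2}^{h/2} Σ_{l=1}^{4} h^{2l−1} (p^{(l)}(x))² dx = (h p'(0) + h³ p'''(0)/24)² + (520 h² p''(0) + 21 h⁴ p⁗(0))²/249600 + (781/720)(h³ p'''(0))² + (1421461/1310400)(h⁴ p⁗(0))². -/
/-!
By Taylor's formula at `0`, each `p^{(l)}` is the polynomial `∑ᵢ p^{(l+i)}(0) xⁱ / i!`, whose
terms vanish for `l + i ≥ 5`. Expanding the squares and integrating monomial by monomial turns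
the left-hand side into a polynomial in `h` and the four numbers `p^{(l)}(0)`, and the identity
is then a ring identity.
-/

open Polynomial Finset

open scoped Nat

section Taylor

variable {K : Type*} [Field K] [CharZero K]

theorem coeff_eq_iterate_derivative_eval_zero_div_factorial (q : K[X]) (k : ℕ) :
    q.coeff k = (derivative^[k] q).eval 0 / k ! := by
  rw [← coeff_zero_eq_eval_zero, coeff_iterate_derivative, zero_add, Nat.descFactorial_self,
    nsmul_eq_mul, mul_div_cancel_left₀ _ (Nat.cast_ne_zero.mpr k.factorial_ne_zero)]

theorem eval_eq_sum_range_iterate_derivative_eval_zero {q : K[X]} {n : ℕ}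
    (hq : q.natDegree ≤ n) (x : K) :
    q.eval x = ∑ k ∈ range (n + 1), (derivative^[k] q).eval 0 / k ! * x ^ k := by
  simp only [eval_eq_sum_range' (Nat.lt_succ_of_le hq),
    coeff_eq_iterate_derivative_eval_zero_div_factorial]

end Taylor

theorem integral_sq_sum_mul_pow (s : Finset ℕ) (c : ℕ → ℝ) (a b : ℝ) :
    ∫ x in a..b, (∑ i ∈ s, c i * x ^ i) ^ 2 =
      ∑ i ∈ s, ∑ j ∈ s, c i * c j * ((b ^ (i + j + 1) - a ^ (i + j + 1)) / (i + j + 1)) := by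
  have hexpand : ∀ x : ℝ,
      (∑ i ∈ s, c i * x ^ i) ^ 2 = ∑ i ∈ s, ∑ j ∈ s, c i * c j * x ^ (i + j) := fun x => by
    rw [sq, sum_mul_sum]
    exact sum_congr rfl fun i _ => sum_congr rfl fun j _ => by ring
  simp_rw [hexpand]
  rw [intervalIntegral.integral_finsetSum fun i _ =>
    Continuous.intervalIntegrable (by fun_prop) _ _]
  refine sum_congr rfl fun i _ => ?_
  rw [intervalIntegral.integral_finsetSum fun j _ =>
    Continuous.intervalIntegrable (by fun_prop) _ _]
  simp_rw [intervalIntegral.integral_const_mul, integral_pow]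
  push_cast
  rfl

theorem weno_smoothness_indicator_sos_general (p : Polynomial ℝ) (hdeg : p.degree ≤ 4)
    (h : ℝ) :
    ∫ x in (-(h / 2))..(h / 2),
        ∑ l ∈ Finset.Icc 1 4,
          h ^ (2 * l - 1) * ((derivative^[l] p).eval x) ^ 2 =
      (h * (derivative p).eval 0 +
          (1 / 24) * h ^ 3 * (derivative^[3] p).eval 0) ^ 2 +
      (520 * h ^ 2 * (derivative^[2] p).eval 0 +
          21 * h ^ 4 * (derivative^[4] p).eval 0) ^ 2 / 249600 +
      (781 / 720) * (h ^ 3 * (derivative^[3] p).eval 0) ^ 2 +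
      (1421461 / 1310400) * (h ^ 4 * (derivative^[4] p).eval 0) ^ 2 := by
  set d : ℕ → ℝ := fun m => (derivative^[m] p).eval 0 with hd
  rw [show (derivative p).eval 0 = d 1 from rfl]
  have hvanish : ∀ m, 5 ≤ m → d m = 0 := fun m hm => by
    simp only [hd, iterate_derivative_eq_zero_of_degree_lt (hdeg.trans_lt (by exact_mod_cast hm)),
      eval_zero]
  have htaylor : ∀ l x, (derivative^[l] p).eval x = ∑ i ∈ range 5, d (i + l) / i ! * x ^ i := by
    intro l x
    have hdeg_l : (derivative^[l] p).natDegree ≤ 4 := (natDegree_iterate_derivative p l).trans <|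
      (Nat.sub_le _ _).trans (natDegree_le_of_degree_le hdeg)
    simp only [eval_eq_sum_range_iterate_derivative_eval_zero hdeg_l x, hd,
      ← Function.iterate_add_apply]
  simp_rw [htaylor]
  rw [intervalIntegral.integral_finsetSum fun l _ =>
    Continuous.intervalIntegrable (by fun_prop) _ _]
  simp_rw [intervalIntegral.integral_const_mul, integral_sq_sum_mul_pow]
  simp [sum_range_succ, Nat.factorial, hvanish, show Icc 1 4 = {1, 2, 3, 4} by rfl]
  ring

/-- Sum-of-squares decomposition of the WENO-JS smoothness indicator for
polynomials of degree ≤ 4. -/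
theorem weno_smoothness_indicator_sos (p : Polynomial ℝ) (hdeg : p.degree ≤ 4)
    (h : ℝ) (hh : 0 < h) :
    ∫ x in (-(h / 2))..(h / 2),
        ∑ l ∈ Finset.Icc 1 4,
          h ^ (2 * l - 1) * ((derivative^[l] p).eval x) ^ 2 =
      (h * (derivative p).eval 0 +
          (1 / 24) * h ^ 3 * (derivative^[3] p).eval 0) ^ 2 +
      (520 * h ^ 2 * (derivative^[2] p).eval 0 +
          21 * h ^ 4 * (derivative^[4] p).eval 0) ^ 2 / 249600 +
      (781 / 720) * (h ^ 3 * (derivative^[3] p).eval 0) ^ 2 +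
      (1421461 / 1310400) * (h ^ 4 * (derivative^[4] p).eval 0) ^ 2 :=
  weno_smoothness_indicator_sos_general p hdeg h
end
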